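/- arXiv:1203.2448 — 3 statements merged into one kernel-verified Lean document; each statement's English description precedes it below -/
import Mathlib

section
/- Let S̃ be a proper geodesic δ-hyperbolic CAT(0) space with visual parameter ξ as in the construction of the Gromov metric. For each r > 0 set C_sh(r) := ξ^r. Then for every pair of distinct points p, x ∈ S̃, if the geodesic segment [p,x] is extended to a geodesic ray with endpoint η ∈ ∂S̃, the shadow sh_p(B(x,r)) is contained in the ball of d_{p,∞}-radius C_sh(r)·ξ^{-d(p,x)} centered at η in the Gromov boundary. -/
open Metric Filter Set
open scoped ENNReal unitInterval

noncomputable section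

namespace FlatRigidity


/-- The Gromov product of `x` and `y` with respect to the base point `p`. -/
def gp {X : Type*} [MetricSpace X] (p x y : X) : ℝ := (dist x p + dist y p - dist x y) / 2

/-- `s` is (the image of) a geodesic segment from `x` to `y`. -/
def IsGeodSeg {X : Type*} [MetricSpace X] (x y : X) (s : Set X) : Prop :=
  ∃ γ : ℝ → X, γ 0 = x ∧ γ (dist x y) = y ∧
    (∀ u ∈ Icc (0:ℝ) (dist x y), ∀ v ∈ Icc (0:ℝ) (dist x y), dist (γ u) (γ v) = |u - v|) ∧
    s = γ '' Icc (0:ℝ) (dist x y)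

/-- A geodesic metric space: any two points are joined by a geodesic segment. -/
def GeodesicSpace (X : Type*) [MetricSpace X] : Prop := ∀ x y : X, ∃ s, IsGeodSeg x y s

/-- `X` is Gromov `δ`-hyperbolic: every geodesic triangle is `δ`-slim, i.e. each side is
contained in the `δ`-neighbourhood of the union of the other two sides. -/
def GromovHyperbolic (X : Type*) [MetricSpace X] (δ : ℝ) : Prop :=
  0 ≤ δ ∧ ∀ x y z : X, ∀ a b c : Set X, IsGeodSeg x y a → IsGeodSeg y z b → IsGeodSeg z x c →
    a ⊆ Metric.cthickening δ (b ∪ c)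

/-- The CAT(0) condition, formulated via the Bruhat–Tits CN-inequality for midpoints. -/
def CAT0 (X : Type*) [MetricSpace X] : Prop :=
  ∀ x y z m : X, dist y m = dist y z / 2 → dist z m = dist y z / 2 →
    dist x m ^ 2 ≤ (dist x y ^ 2 + dist x z ^ 2) / 2 - dist y z ^ 2 / 4

/-- A sequence is admissible if its pairwise Gromov products tend to infinity. -/
def Admissible {X : Type*} [MetricSpace X] (u : ℕ → X) : Prop :=
  ∀ p : X, Tendsto (fun ij : ℕ × ℕ => gp p (u ij.1) (u ij.2)) atTop atTop

/-- Two admissible sequences are equivalent if their mutual Gromov products tend to infinity. -/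
def SeqEquiv {X : Type*} [MetricSpace X] (u v : ℕ → X) : Prop :=
  ∀ p : X, Tendsto (fun i => gp p (u i) (v i)) atTop atTop

def bdryRel (X : Type*) [MetricSpace X] :
    {s : ℕ → X // Admissible s} → {s : ℕ → X // Admissible s} → Prop :=
  fun u v => SeqEquiv u.1 v.1

/-- The Gromov boundary: equivalence classes of admissible sequences. -/
def Bdry (X : Type*) [MetricSpace X] := Quot (bdryRel X)

/-- The boundary point represented by an admissible sequence. -/
def mkB {X : Type*} [MetricSpace X] (u : ℕ → X) (hu : Admissible u) : Bdry X :=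
  Quot.mk (bdryRel X) ⟨u, hu⟩

/-- The Gromov product of two boundary points with respect to the base point `p`:
`(η,ζ)_p = sup { liminf_{i,j} (x_i, y_j)_p : (x_i) ∈ η, (y_j) ∈ ζ }`. -/
def gpB {X : Type*} [MetricSpace X] (p : X) (η ζ : Bdry X) : ℝ≥0∞ :=
  sSup { r : ℝ≥0∞ | ∃ (u : ℕ → X) (hu : Admissible u) (v : ℕ → X) (hv : Admissible v),
    mkB u hu = η ∧ mkB v hv = ζ ∧
    r = Filter.liminf (fun ij : ℕ × ℕ => ENNReal.ofReal (gp p (u ij.1) (v ij.2))) atTop }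

/-- `ξ^(-t)`, with the convention that it is `0` for `t = ∞`. -/
def visExp (ξ : ℝ) (t : ℝ≥0∞) : ℝ := if t = ⊤ then 0 else ξ ^ (-t.toReal)

/-- `d` is a metric (distance function). -/
def IsMetricFun {A : Type*} (d : A → A → ℝ) : Prop :=
  (∀ x y, 0 ≤ d x y) ∧ (∀ x y, d x y = 0 ↔ x = y) ∧ (∀ x y, d x y = d y x) ∧
    ∀ x y z, d x z ≤ d x y + d y z

/-- `d` is a Gromov (visual) metric on the boundary, based at `p`, with visual parameter `ξ`
and multiplicative error `1 - ε`. -/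
def IsGromovMetric {X : Type*} [MetricSpace X] (p : X) (ξ ε : ℝ)
    (d : Bdry X → Bdry X → ℝ) : Prop :=
  IsMetricFun d ∧ ∀ η ζ : Bdry X,
    d η ζ ≤ visExp ξ (gpB p η ζ) ∧ (1 - ε) * visExp ξ (gpB p η ζ) ≤ d η ζ

/-- `γ` is a unit-speed geodesic ray emanating from `p` (parametrised on `[0,∞)`). -/
def IsRayFrom {X : Type*} [MetricSpace X] (p : X) (γ : ℝ → X) : Prop :=
  γ 0 = p ∧ ∀ s t : ℝ, 0 ≤ s → 0 ≤ t → dist (γ s) (γ t) = |s - t|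

/-- The ray `γ` converges to the boundary point `η`. -/
def RayTo {X : Type*} [MetricSpace X] (γ : ℝ → X) (η : Bdry X) : Prop :=
  ∃ h : Admissible fun n : ℕ => γ n, mkB (fun n : ℕ => γ n) h = η

/-- The boundary shadow of a set `U` with respect to the base point `p`: all boundary points
reached by some geodesic ray from `p` which meets `U`. -/
def shadow {X : Type*} [MetricSpace X] (p : X) (U : Set X) : Set (Bdry X) :=
  { η | ∃ γ : ℝ → X, IsRayFrom p γ ∧ RayTo γ η ∧ ∃ t : ℝ, 0 ≤ t ∧ γ t ∈ U }

/-- The open ball of a distance function. -/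
def ballD {A : Type*} (d : A → A → ℝ) (x : A) (r : ℝ) : Set A := { y | d x y < r }

/-- The closed ball of a distance function. -/
def cballD {A : Type*} (d : A → A → ℝ) (x : A) (r : ℝ) : Set A := { y | d x y ≤ r }

/-- Closedness of a set with respect to a distance function. -/
def IsClosedD {A : Type*} (d : A → A → ℝ) (U : Set A) : Prop :=
  ∀ y : A, (∀ ε : ℝ, 0 < ε → ∃ u ∈ U, d y u < ε) → y ∈ U

/-- `g` is an `L`-quasi-geodesic on the parameter set `J`. -/
def IsQuasiGeodesicOn {X : Type*} [MetricSpace X] (L : ℝ) (J : Set ℝ) (g : ℝ → X) : Prop :=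
  ∀ s ∈ J, ∀ t ∈ J,
    dist (g s) (g t) ≤ (1 + L) * |s - t| + L ∧ (1 + L)⁻¹ * |s - t| - L ≤ dist (g s) (g t)

/-- `f` is an `L`-quasi-isometry. -/
def IsQuasiIsometry {X Y : Type*} [MetricSpace X] [MetricSpace Y] (L : ℝ) (f : X → Y) : Prop :=
  (∀ x y : X, dist (f x) (f y) ≤ (1 + L) * dist x y + L ∧
      (1 + L)⁻¹ * dist x y - L ≤ dist (f x) (f y)) ∧
    ∃ C : ℝ, ∀ y : Y, ∃ x : X, dist y (f x) ≤ C

/-- The forward endpoint (in `X ⊕ ∂X`) of a path `g` defined on the parameter set `J`. -/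
def FwdEndpoint {X : Type*} [MetricSpace X] (J : Set ℝ) (g : ℝ → X) : X ⊕ Bdry X → Prop
  | Sum.inl x => ∃ b, IsGreatest J b ∧ g b = x
  | Sum.inr η => (∀ r : ℝ, ∃ t ∈ J, r ≤ t) ∧
      ∀ s : ℕ → ℝ, (∀ n, s n ∈ J) → Tendsto s atTop atTop →
        ∃ h : Admissible fun n => g (s n), mkB (fun n => g (s n)) h = η

/-- The backward endpoint (in `X ⊕ ∂X`) of a path `g` defined on the parameter set `J`. -/
def BwdEndpoint {X : Type*} [MetricSpace X] (J : Set ℝ) (g : ℝ → X) : X ⊕ Bdry X → Prop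
  | Sum.inl x => ∃ a, IsLeast J a ∧ g a = x
  | Sum.inr η => (∀ r : ℝ, ∃ t ∈ J, t ≤ r) ∧
      ∀ s : ℕ → ℝ, (∀ n, s n ∈ J) → Tendsto s atTop atBot →
        ∃ h : Admissible fun n => g (s n), mkB (fun n => g (s n)) h = η

/-- `H` is a stability constant for `L`-quasi-geodesics in `X`: any two `L`-quasi-geodesics
with the same (possibly ideal) endpoints are within Hausdorff distance `H`. -/
def StabilityConst (X : Type*) [MetricSpace X] (L H : ℝ) : Prop :=
  ∀ (J J' : Set ℝ) (g g' : ℝ → X), J.OrdConnected → J'.OrdConnected →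
    IsQuasiGeodesicOn L J g → IsQuasiGeodesicOn L J' g' →
    ∀ e₁ e₂ : X ⊕ Bdry X, BwdEndpoint J g e₁ → BwdEndpoint J' g' e₁ →
      FwdEndpoint J g e₂ → FwdEndpoint J' g' e₂ →
      g' '' J' ⊆ Metric.cthickening H (g '' J)

/-- `F` is the boundary extension of `f`. -/
def ExtendsToBoundary {X Y : Type*} [MetricSpace X] [MetricSpace Y]
    (f : X → Y) (F : Bdry X → Bdry Y) : Prop :=
  ∀ (u : ℕ → X) (hu : Admissible u), ∃ hv : Admissible fun n => f (u n),
    F (mkB u hu) = mkB (fun n => f (u n)) hv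

/-- The diameter of a set with respect to a distance function, in `ℝ≥0∞`. -/
def diamD {A : Type*} (d : A → A → ℝ) (U : Set A) : ℝ≥0∞ :=
  ⨆ x ∈ U, ⨆ y ∈ U, ENNReal.ofReal (d x y)

/-- The `ε`-approximating pre-measure of the `a`-dimensional Hausdorff measure of `d`. -/
def hMeasPre {A : Type*} (d : A → A → ℝ) (a : ℝ) (ε : ℝ≥0∞) (E : Set A) : ℝ≥0∞ :=
  ⨅ (c : ℕ → Set A) (_ : E ⊆ ⋃ n, c n) (_ : ∀ n, diamD d (c n) ≤ ε),
    ∑' n, diamD d (c n) ^ a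

/-- The `a`-dimensional Hausdorff measure of the distance function `d`. -/
def hMeas {A : Type*} (d : A → A → ℝ) (a : ℝ) (E : Set A) : ℝ≥0∞ :=
  ⨆ (ε : ℝ≥0∞) (_ : 0 < ε), hMeasPre d a ε E

/-- The Hausdorff dimension of the distance function `d`. -/
def hDim {A : Type*} (d : A → A → ℝ) : ℝ :=
  sInf { a : ℝ | 0 ≤ a ∧ hMeas d a univ = 0 }

/-- The Hausdorff measure (in the Hausdorff dimension) of the distance function `d`. -/
def hausdorffD {A : Type*} (d : A → A → ℝ) (E : Set A) : ℝ≥0∞ := hMeas d (hDim d) E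

/-- The set function `μ` is doubling with respect to the distance function `d`. -/
def IsDoubling {A : Type*} (d : A → A → ℝ) (μ : Set A → ℝ≥0∞) : Prop :=
  ∃ C : ℝ, 0 < C ∧ ∀ (x : A) (r : ℝ), μ (ballD d x (2 * r)) ≤ ENNReal.ofReal C * μ (ballD d x r)

/-- The collection `V` is a Vitali covering for `(d, μ)`. -/
def IsVitali {A : Type*} (d : A → A → ℝ) (μ : Set A → ℝ≥0∞) (V : Set (Set A)) : Prop :=
  (∀ U ∈ V, IsClosedD d U) ∧
  (∃ CV : ℝ, 0 < CV ∧ ∀ U ∈ V, ∃ (x : A) (r : ℝ), U ⊆ ballD d x r ∧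
      ENNReal.ofReal CV * μ (ballD d x r) ≤ μ U) ∧
  ∀ x : A, ∃ U : ℕ → Set A, (∀ i, U i ∈ V ∧ x ∈ U i) ∧
    Tendsto (fun i => diamD d (U i)) atTop (nhds 0)

/-- The volume entropy of the measure-like set function `ℓ`, with base point `p`. -/
def entropyOf {A : Type*} [MetricSpace A] (ℓ : Set A → ℝ≥0∞) (p : A) : ℝ :=
  Filter.limsup (fun R : ℝ => Real.log (ℓ (Metric.ball p R)).toReal / R) Filter.atTop

/-- A non-zero, locally finite, countably subadditive measure-like set function. -/
def IsRadonLike {A : Type*} [MetricSpace A] (ℓ : Set A → ℝ≥0∞) : Prop :=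
  ℓ ∅ = 0 ∧ (∀ U V : Set A, U ⊆ V → ℓ U ≤ ℓ V) ∧
    (∀ u : ℕ → Set A, ℓ (⋃ n, u n) ≤ ∑' n, ℓ (u n)) ∧
    (∀ (x : A) (R : ℝ), ℓ (Metric.ball x R) < ⊤) ∧ ℓ Set.univ ≠ 0

/-- The boundary map `F` identifies the measure classes of the boundary Hausdorff measures:
a set is null for (every) Gromov-metric Hausdorff measure on `∂U` iff its image under `F`
is null for (every) Gromov-metric Hausdorff measure on `∂V`. -/
def MeasureClassesCorrespond {U V : Type*} [MetricSpace U] [MetricSpace V]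
    (F : Bdry U → Bdry V) : Prop :=
  ∀ (pS : U) (ξS εS : ℝ) (dS : Bdry U → Bdry U → ℝ), 1 < ξS → 0 ≤ εS → εS < 1 →
    IsGromovMetric pS ξS εS dS →
    ∀ (pT : V) (ξT εT : ℝ) (dT : Bdry V → Bdry V → ℝ), 1 < ξT → 0 ≤ εT → εT < 1 →
      IsGromovMetric pT ξT εT dT →
      ∀ A : Set (Bdry U), hausdorffD dS A = 0 ↔ hausdorffD dT (F '' A) = 0

/-- A (closed) flat surface: a closed surface of genus at least `2`, equipped with a geodesic
metric which is flat (locally Euclidean) away from a finite set of singular cone points. -/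
structure FlatSurface where
  M : Type
  [ms : MetricSpace M]
  [cpt : CompactSpace M]
  [conn : ConnectedSpace M]
  genus : ℕ
  genus_ge_two : 2 ≤ genus
  surface : ∀ x : M, ∃ U : Set M, x ∈ U ∧ IsOpen U ∧
      Nonempty (U ≃ₜ EuclideanSpace ℝ (Fin 2))
  sing : Set M
  sing_finite : sing.Finite
  geod : GeodesicSpace M
  locallyFlat : ∀ x : M, x ∉ sing → ∃ ε > 0, ∃ φ : M → EuclideanSpace ℝ (Fin 2),
      ∀ y ∈ Metric.ball x ε, ∀ z ∈ Metric.ball x ε, dist (φ y) (φ z) = dist y z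

attribute [instance] FlatSurface.ms FlatSurface.cpt FlatSurface.conn

/-- A universal covering of a flat surface, with the lifted metric: a simply connected,
proper, geodesic, Gromov hyperbolic CAT(0) space with a locally isometric covering
projection. -/
structure UnivCover (S : FlatSurface) where
  Mt : Type
  [mst : MetricSpace Mt]
  [prop : ProperSpace Mt]
  [sconn : SimplyConnectedSpace Mt]
  proj : Mt → S.M
  covering : IsCoveringMap proj
  localIso : ∀ x : Mt, ∃ ε > 0, ∀ y ∈ Metric.ball x ε, ∀ z ∈ Metric.ball x ε,
      dist (proj y) (proj z) = dist y z
  geod : GeodesicSpace Mt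
  hyp : ∃ δ : ℝ, GromovHyperbolic Mt δ
  cat : CAT0 Mt

attribute [instance] UnivCover.mst UnivCover.prop UnivCover.sconn



/-- A deck transformation of the universal covering. -/
def IsDeck {S : FlatSurface} (C : UnivCover S) (g : C.Mt → C.Mt) : Prop :=
  Isometry g ∧ Function.Bijective g ∧ ∀ x, C.proj (g x) = C.proj x

/-- A non-zero Radon-like measure on the universal covering, invariant under all deck
transformations. -/
def IsVolumeMeasure {S : FlatSurface} (C : UnivCover S) (ℓ : Set C.Mt → ℝ≥0∞) : Prop :=
  IsRadonLike ℓ ∧ ∀ g : C.Mt → C.Mt, IsDeck C g → ∀ A : Set C.Mt, ℓ (g '' A) = ℓ A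

/-- `c` is a unit-speed local geodesic on the interval `[a,b]`. -/
def IsLocalGeodOn {A : Type*} [MetricSpace A] (c : ℝ → A) (a b : ℝ) : Prop :=
  ∀ s ∈ Icc a b, ∃ ε > 0, ∀ u ∈ Icc a b, ∀ v ∈ Icc a b,
    |u - s| < ε → |v - s| < ε → dist (c u) (c v) = |u - v|

/-- The length of a path parametrised by the unit interval (its total variation). -/
def PathLen {A : Type*} [MetricSpace A] (γ : unitInterval → A) : ℝ≥0∞ :=
  eVariationOn γ Set.univ

/-- A constant-speed local geodesic parametrised by the unit interval. -/
def IsLocalGeodesicPath {A : Type*} [MetricSpace A] (γ : unitInterval → A) : Prop :=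
  ∃ L : ℝ, 0 ≤ L ∧ ∀ t : unitInterval, ∃ ε > 0, ∀ s u : unitInterval,
    |(s : ℝ) - (t : ℝ)| < ε → |(u : ℝ) - (t : ℝ)| < ε →
      dist (γ s) (γ u) = L * |(s : ℝ) - (u : ℝ)|

/-- A closed curve. -/
def IsLoop {A : Type*} [TopologicalSpace A] (γ : C(I, A)) : Prop := γ 0 = γ 1

/-- Free homotopy of closed curves. -/
def FreelyHomotopic {A : Type*} [TopologicalSpace A] (α β : C(I, A)) : Prop :=
  ∃ H : C(I × I, A),
    (∀ t, H (0, t) = α t) ∧ (∀ t, H (1, t) = β t) ∧ ∀ s, H (s, 0) = H (s, 1)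

/-- The infimal length in the free homotopy class of a closed curve. -/
def lengthSpec {A : Type*} [MetricSpace A] (α : C(I, A)) : ℝ≥0∞ :=
  ⨅ (β : C(I, A)) (_ : FreelyHomotopic α β), PathLen ⇑β

/-- Isotopy of two maps: a continuous family of homeomorphisms joining them. -/
def Isotopic {X A : Type*} [TopologicalSpace X] [TopologicalSpace A] (f g : X → A) : Prop :=
  ∃ H : C(I × X, A), (∀ x, H (0, x) = f x) ∧ (∀ x, H (1, x) = g x) ∧
    ∀ s : I, Function.Bijective fun x => H (s, x)

/-- A marked flat surface: a flat surface together with a marking homeomorphism from the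
model surface `X`. -/
structure MarkedFlatSurface (X : Type*) [TopologicalSpace X] where
  S : FlatSurface
  mark : X ≃ₜ S.M


/-- the shadow of the ball `B(x,r)` seen from `p` is contained in the boundary
ball of radius `C_sh(r)·ξ^{-d(p,x)}`, `C_sh(r) := ξ^r`, centred at the endpoint `η` of a
geodesic ray extending `[p,x]`. -/
theorem shadow_in_ball {X : Type*} [MetricSpace X] [ProperSpace X]
    (hgeo : GeodesicSpace X) (δ : ℝ) (hδ : GromovHyperbolic X δ) (hcat : CAT0 X)
    (ξ ε : ℝ) (hξ : 1 < ξ) (hε0 : 0 ≤ ε) (hε1 : ε < 1)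
    (p x : X) (hpx : p ≠ x)
    (dp : Bdry X → Bdry X → ℝ) (hdp : IsGromovMetric p ξ ε dp)
    (r : ℝ) (hr : 0 < r)
    (γ : ℝ → X) (hγ : IsRayFrom p γ) (hγx : γ (dist p x) = x)
    (η : Bdry X) (hη : RayTo γ η) :
    shadow p (Metric.ball x r) ⊆ cballD dp η (ξ ^ r * ξ ^ (-dist p x)) := by
  have hξ0 : (0:ℝ) < ξ := lt_trans one_pos hξ
  set D := dist p x with hD
  intro ζ hζ
  obtain ⟨γ', hray', hto', t, ht0, htball⟩ := hζ
  obtain ⟨hadm, hmk⟩ := hη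
  obtain ⟨hadm', hmk'⟩ := hto'
  -- basic facts about the rays
  obtain ⟨hγ0, hγiso⟩ := hγ
  obtain ⟨hγ'0, hγ'iso⟩ := hray'
  have hD0 : 0 ≤ D := dist_nonneg
  have hxt : dist x (γ' t) < r := by
    have := htball
    simpa [Metric.mem_ball, dist_comm] using this
  have htd : dist p (γ' t) = t := by
    have := hγ'iso 0 t le_rfl ht0
    rw [hγ'0] at this
    simpa [abs_of_nonneg ht0, abs_sub_comm] using this
  have htlow : D - r < t := by
    have h1 : D ≤ dist p (γ' t) + dist (γ' t) x := dist_triangle p (γ' t) x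
    rw [htd, dist_comm] at h1
    linarith
  -- the Gromov product bound
  have key : ∀ i j : ℝ, D ≤ i → t ≤ j → D - r ≤ gp p (γ i) (γ' j) := by
    intro i j hi hj
    have hi0 : 0 ≤ i := le_trans hD0 hi
    have hj0 : 0 ≤ j := le_trans ht0 hj
    have h1 : dist (γ i) p = i := by
      have := hγiso i 0 hi0 le_rfl
      rw [hγ0] at this; simpa [abs_of_nonneg hi0] using this
    have h2 : dist (γ' j) p = j := by
      have := hγ'iso j 0 hj0 le_rfl
      rw [hγ'0] at this; simpa [abs_of_nonneg hj0] using this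
    have h3 : dist (γ i) x = i - D := by
      have := hγiso i D hi0 hD0
      rw [hγx] at this
      rw [this, abs_of_nonneg (by linarith)]
    have h4 : dist (γ' t) (γ' j) = j - t := by
      have := hγ'iso t j ht0 hj0
      rw [this, abs_of_nonpos (by linarith)]
      ring
    have h5 : dist (γ i) (γ' j) ≤ (i - D) + r + (j - t) := by
      calc dist (γ i) (γ' j) ≤ dist (γ i) x + dist x (γ' t) + dist (γ' t) (γ' j) :=
              dist_triangle4 _ _ _ _
        _ ≤ (i - D) + r + (j - t) := by
              rw [h3, h4]; linarith
    unfold gp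
    rw [h1, h2]
    have : dist (γ i) (γ' j) ≤ i + j - 2 * D + 2 * r := by linarith
    linarith
  -- lower bound on the boundary Gromov product
  set L : ℝ≥0∞ := Filter.liminf
      (fun ij : ℕ × ℕ => ENNReal.ofReal (gp p (γ ij.1) (γ' ij.2))) atTop with hLdef
  have hLmem : L ∈ { s : ℝ≥0∞ | ∃ (u : ℕ → X) (hu : Admissible u) (v : ℕ → X)
      (hv : Admissible v), mkB u hu = η ∧ mkB v hv = ζ ∧
      s = Filter.liminf (fun ij : ℕ × ℕ => ENNReal.ofReal (gp p (u ij.1) (v ij.2))) atTop } :=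
    ⟨_, hadm, _, hadm', hmk, hmk', rfl⟩
  have hLle : L ≤ gpB p η ζ := le_sSup hLmem
  have hev : ∀ᶠ ij : ℕ × ℕ in atTop,
      ENNReal.ofReal (D - r) ≤ ENNReal.ofReal (gp p (γ ij.1) (γ' ij.2)) := by
    obtain ⟨N, hN⟩ := exists_nat_ge D
    obtain ⟨M, hM⟩ := exists_nat_ge t
    filter_upwards [Filter.eventually_ge_atTop (N, M)] with ij hij
    exact ENNReal.ofReal_le_ofReal (key ij.1 ij.2
      (le_trans hN (by exact_mod_cast hij.1)) (le_trans hM (by exact_mod_cast hij.2)))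
  have hlow : ENNReal.ofReal (D - r) ≤ L :=
    Filter.le_liminf_of_le (by isBoundedDefault) hev
  have hg : ENNReal.ofReal (D - r) ≤ gpB p η ζ := le_trans hlow hLle
  -- conclude via the Gromov metric estimates
  have h1 := (hdp.2 η ζ).1
  have hgoal : visExp ξ (gpB p η ζ) ≤ ξ ^ r * ξ ^ (-D) := by
    have hrhs : ξ ^ r * ξ ^ (-D) = ξ ^ (r - D) := by
      rw [← Real.rpow_add hξ0]; ring_nf
    rw [hrhs]
    unfold visExp
    by_cases htop : gpB p η ζ = ⊤
    · simp [htop]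
      positivity
    · simp only [htop, if_false]
      have hto : D - r ≤ (gpB p η ζ).toReal :=
        (ENNReal.ofReal_le_iff_le_toReal htop).mp hg
      exact Real.rpow_le_rpow_of_exponent_le (le_of_lt hξ) (by linarith)
  exact le_trans h1 hgoal

end FlatRigidity
end
end

section
/- Let f: S̃ → T̃ be an L-quasi-isometry between proper geodesic δ-hyperbolic spaces, let H(δ,L) be the stability constant for L-quasi-geodesics, and let r > (H(δ,L)+L)(1+L). Define r_s := r/(1+L) − H(δ,L) − L > 0 and r_b := (1+L)r + L + H(δ,L). Then for all points p, x ∈ S̃: sh_{f(p)}(B(f(x),r_s)) ⊆ f(sh_p(B(x,r))) ⊆ sh_{f(p)}(B(f(x),r_b)), where f also denotes the induced boundary homeomorphism ∂S̃ → ∂T̃. -/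
open Metric Filter Set
open scoped ENNReal unitInterval

noncomputable section

namespace FlatRigidity


section ShadowLemmas

variable {Z : Type*} [MetricSpace Z]

lemma gp_self (q x : Z) : gp q x x = dist x q := by simp [gp]

lemma gp_basepoint (p w x y : Z) : gp p x y - dist p w ≤ gp w x y := by
  have h1 := dist_triangle x w p
  have h2 := dist_triangle y w p
  have h3 : dist w p = dist p w := dist_comm w p
  unfold gp
  linarith

lemma ray_dist {p : Z} {γ : ℝ → Z} (hγ : IsRayFrom p γ) {t : ℝ} (ht : 0 ≤ t) :
    dist (γ t) p = t := by
  have h := hγ.2 t 0 ht le_rfl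
  rw [hγ.1] at h
  rw [h]
  simp [abs_of_nonneg ht]

lemma ray_gp {p : Z} {γ : ℝ → Z} (hγ : IsRayFrom p γ) {a b : ℝ} (ha : 0 ≤ a) (hb : 0 ≤ b) :
    gp p (γ a) (γ b) = min a b := by
  have h1 := hγ.2 a b ha hb
  have h2 : min a b + max a b = a + b := min_add_max a b
  have h3 : max a b - min a b = |a - b| := by rw [abs_sub_comm]; exact max_sub_min_eq_abs a b
  unfold gp
  rw [ray_dist hγ ha, ray_dist hγ hb, h1]
  linarith

lemma tendsto_min_prod {s t : ℕ → ℝ} (hs : Tendsto s atTop atTop) (ht : Tendsto t atTop atTop) :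
    Tendsto (fun ij : ℕ × ℕ => min (s ij.1) (t ij.2)) atTop atTop := by
  rw [← prod_atTop_atTop_eq]
  refine tendsto_atTop.2 fun b => ?_
  filter_upwards [(hs.comp tendsto_fst).eventually_ge_atTop b,
    (ht.comp tendsto_snd).eventually_ge_atTop b] with ij h1 h2
  exact le_min h1 h2

lemma ray_admissible {p : Z} {γ : ℝ → Z} (hγ : IsRayFrom p γ) {s : ℕ → ℝ}
    (hs0 : ∀ n, 0 ≤ s n) (hs : Tendsto s atTop atTop) :
    Admissible fun n => γ (s n) := by
  intro w
  have key : ∀ ij : ℕ × ℕ, min (s ij.1) (s ij.2) - dist p w ≤ gp w (γ (s ij.1)) (γ (s ij.2)) := by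
    intro ij
    have h := gp_basepoint p w (γ (s ij.1)) (γ (s ij.2))
    rw [ray_gp hγ (hs0 _) (hs0 _)] at h
    exact h
  have h2 : Tendsto (fun ij : ℕ × ℕ => min (s ij.1) (s ij.2) - dist p w) atTop atTop := by
    simp only [sub_eq_add_neg]
    exact tendsto_atTop_add_const_right _ _ (tendsto_min_prod hs hs)
  exact tendsto_atTop_mono key h2

lemma ray_seqEquiv {p : Z} {γ : ℝ → Z} (hγ : IsRayFrom p γ) {s s' : ℕ → ℝ}
    (hs0 : ∀ n, 0 ≤ s n) (hs'0 : ∀ n, 0 ≤ s' n)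
    (hs : Tendsto s atTop atTop) (hs' : Tendsto s' atTop atTop) :
    SeqEquiv (fun n => γ (s n)) (fun n => γ (s' n)) := by
  intro w
  have key : ∀ i, min (s i) (s' i) - dist p w ≤ gp w (γ (s i)) (γ (s' i)) := by
    intro i
    have h := gp_basepoint p w (γ (s i)) (γ (s' i))
    rw [ray_gp hγ (hs0 _) (hs'0 _)] at h
    exact h
  have h2 : Tendsto (fun i => min (s i) (s' i) - dist p w) atTop atTop := by
    simp only [sub_eq_add_neg]
    refine tendsto_atTop_add_const_right _ _ (tendsto_atTop.2 fun b => ?_)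
    filter_upwards [hs.eventually_ge_atTop b, hs'.eventually_ge_atTop b] with i h1 h2
    exact le_min h1 h2
  exact tendsto_atTop_mono key h2

lemma ray_rayTo_seq {p : Z} {γ : ℝ → Z} {η : Bdry Z} (hγ : IsRayFrom p γ) (hto : RayTo γ η)
    {s : ℕ → ℝ} (hs0 : ∀ n, 0 ≤ s n) (hs : Tendsto s atTop atTop) :
    ∃ h : Admissible fun n => γ (s n), mkB (fun n => γ (s n)) h = η := by
  obtain ⟨h0, hmk⟩ := hto
  refine ⟨ray_admissible hγ hs0 hs, ?_⟩
  rw [← hmk]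
  exact Quot.sound (ray_seqEquiv hγ hs0 (fun n => Nat.cast_nonneg n) hs
    tendsto_natCast_atTop_atTop)

lemma ray_bwdEndpoint {p : Z} {γ : ℝ → Z} (hγ : IsRayFrom p γ) :
    BwdEndpoint (Ici 0) γ (Sum.inl p) := ⟨0, isLeast_Ici, hγ.1⟩

lemma ray_fwdEndpoint {p : Z} {γ : ℝ → Z} {η : Bdry Z} (hγ : IsRayFrom p γ) (hto : RayTo γ η) :
    FwdEndpoint (Ici 0) γ (Sum.inr η) :=
  ⟨fun r => ⟨max r 0, le_max_right r 0, le_max_left r 0⟩,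
   fun s hs hst => ray_rayTo_seq hγ hto (fun n => hs n) hst⟩

lemma ray_isQG {L : ℝ} (hL : 0 ≤ L) {p : Z} {γ : ℝ → Z} (hγ : IsRayFrom p γ) :
    IsQuasiGeodesicOn L (Ici 0) γ := by
  intro s hs t ht
  rw [hγ.2 s t hs ht]
  have h1 : 0 ≤ |s - t| := abs_nonneg _
  have h2 : (1 + L)⁻¹ ≤ 1 := by
    rw [inv_le_one_iff₀]
    right; linarith
  have h3 : (1 + L)⁻¹ * |s - t| ≤ |s - t| := mul_le_of_le_one_left h1 h2
  constructor
  · nlinarith [mul_nonneg hL h1]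
  · linarith

lemma comp_isQG {Y : Type*} [MetricSpace Y] {L : ℝ} {f : Z → Y} (hf : IsQuasiIsometry L f)
    {p : Z} {γ : ℝ → Z} (hγ : IsRayFrom p γ) :
    IsQuasiGeodesicOn L (Ici 0) fun t => f (γ t) := by
  intro s hs t ht
  have h := hf.1 (γ s) (γ t)
  rwa [hγ.2 s t hs ht] at h

lemma comp_bwdEndpoint {Y : Type*} [MetricSpace Y] {f : Z → Y} {p : Z} {γ : ℝ → Z}
    (hγ : IsRayFrom p γ) :
    BwdEndpoint (Ici 0) (fun t => f (γ t)) (Sum.inl (f p)) :=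
  ⟨0, isLeast_Ici, by show f (γ 0) = f p; rw [hγ.1]⟩

lemma comp_fwdEndpoint {Y : Type*} [MetricSpace Y] {f : Z → Y} {F : Bdry Z → Bdry Y}
    (hF : ExtendsToBoundary f F) {p : Z} {γ : ℝ → Z} {η : Bdry Z}
    (hγ : IsRayFrom p γ) (hto : RayTo γ η) :
    FwdEndpoint (Ici 0) (fun t => f (γ t)) (Sum.inr (F η)) := by
  refine ⟨fun r => ⟨max r 0, le_max_right r 0, le_max_left r 0⟩, fun s hs hst => ?_⟩
  obtain ⟨h, hmk⟩ := ray_rayTo_seq hγ hto (fun n => hs n) hst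
  obtain ⟨hv, hFeq⟩ := hF (fun n => γ (s n)) h
  exact ⟨hv, by rw [← hFeq, hmk]⟩

end ShadowLemmas

section GpGe

variable {Z : Type*} [MetricSpace Z]

lemma gp_ge_min {δ : ℝ} (hg : GeodesicSpace Z) (hZ : GromovHyperbolic Z δ)
    (q z y : Z) {s : Set Z} (hs : IsGeodSeg q z s) {w : Z} (hw : w ∈ s) :
    min (dist q w) (gp q z y) - δ ≤ gp q w y := by
  obtain ⟨b, hb⟩ := hg z y
  obtain ⟨c, hc⟩ := hg y q
  have hwth : w ∈ Metric.cthickening δ (b ∪ c) := hZ.2 q z y s b c hs hb hc hw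
  obtain ⟨β, hβ0, hβe, hβiso, hbeq⟩ := hb
  obtain ⟨χ, hχ0, hχe, hχiso, hceq⟩ := hc
  have hne : (b ∪ c).Nonempty := ⟨z, Or.inl (by
    rw [hbeq]; exact ⟨0, ⟨le_rfl, dist_nonneg⟩, hβ0⟩)⟩
  have hID : Metric.infDist w (b ∪ c) ≤ δ := by
    have h1 : EMetric.infEdist w (b ∪ c) ≤ ENNReal.ofReal δ :=
      Metric.mem_cthickening_iff.1 hwth
    exact ENNReal.toReal_le_of_le_ofReal hZ.1 h1
  refine le_of_forall_pos_le_add fun ε hε => ?_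
  obtain ⟨v, hv, hdv⟩ := (Metric.infDist_lt_iff hne).1 (lt_of_le_of_lt hID (lt_add_of_pos_right δ hε))
  have hcomm1 : dist w q = dist q w := dist_comm w q
  rcases hv with hv | hv
  · -- v on geodesic from z to y
    rw [hbeq] at hv
    obtain ⟨u, hu, rfl⟩ := hv
    have e1 : dist (β u) z = u := by
      have h := hβiso u hu 0 ⟨le_rfl, dist_nonneg⟩
      rw [hβ0] at h
      rw [h, sub_zero, abs_of_nonneg hu.1]
    have e2 : dist (β u) y = dist z y - u := by
      have h := hβiso u hu (dist z y) ⟨dist_nonneg, le_rfl⟩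
      rw [hβe] at h
      rw [h, abs_of_nonpos (by linarith [hu.2]), neg_sub]
    have t1 := dist_triangle w (β u) y
    have t2 := dist_triangle z (β u) w
    have t3 := dist_triangle q w z
    have hc2 : dist z (β u) = dist (β u) z := dist_comm z (β u)
    have hc3 : dist (β u) w = dist w (β u) := dist_comm (β u) w
    have hc4 : dist w z = dist z w := dist_comm w z
    have hc5 : dist z q = dist q z := dist_comm z q
    have hmin : min (dist q w) (gp q z y) ≤ gp q z y := min_le_right _ _
    unfold gp at *
    linarith
  · -- v on geodesic from y to q
    rw [hceq] at hv
    obtain ⟨u, hu, rfl⟩ := hv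
    have e1 : dist (χ u) y = u := by
      have h := hχiso u hu 0 ⟨le_rfl, dist_nonneg⟩
      rw [hχ0] at h
      rw [h, sub_zero, abs_of_nonneg hu.1]
    have e2 : dist (χ u) q = dist y q - u := by
      have h := hχiso u hu (dist y q) ⟨dist_nonneg, le_rfl⟩
      rw [hχe] at h
      rw [h, abs_of_nonpos (by linarith [hu.2]), neg_sub]
    have t1 := dist_triangle w (χ u) y
    have t2 := dist_triangle w (χ u) q
    have hmin : min (dist q w) (gp q z y) ≤ dist q w := min_le_left _ _
    have hc6 : dist y q = dist q y := dist_comm y q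
    unfold gp at *
    linarith
end GpGe

section ExistsRay
open scoped Topology

variable {Z : Type*} [MetricSpace Z]

lemma exists_ray [ProperSpace Z] {δ : ℝ} (hg : GeodesicSpace Z) (hZ : GromovHyperbolic Z δ)
    (q : Z) (ζ : Bdry Z) : ∃ γ : ℝ → Z, IsRayFrom q γ ∧ RayTo γ ζ := by
  obtain ⟨⟨u, hu⟩, hrep⟩ := Quot.exists_rep (show Quot (bdryRel Z) from ζ)
  -- distances go to infinity
  have hD : Tendsto (fun n => dist q (u n)) atTop atTop := by
    have hdiag : Tendsto (fun n : ℕ => ((n, n) : ℕ × ℕ)) atTop atTop := by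
      rw [← prod_atTop_atTop_eq]
      exact tendsto_id.prodMk tendsto_id
    have h := (hu q).comp hdiag
    refine h.congr fun n => ?_
    simp [gp_self, dist_comm]
  choose sg hσ using fun n => hg q (u n)
  choose g h1 h2 h3 h4 using hσ
  set pt : ℕ → ℝ → Z := fun n t => g n (min t (dist q (u n))) with hpt
  have hptmem : ∀ t : ℝ, 0 ≤ t → ∀ n, pt n t ∈ closedBall q t := by
    intro t ht n
    have hmm : min t (dist q (u n)) ∈ Icc 0 (dist q (u n)) :=
      ⟨le_min ht dist_nonneg, min_le_right _ _⟩
    have h := h3 n _ hmm 0 ⟨le_rfl, dist_nonneg⟩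
    rw [h1 n] at h
    rw [mem_closedBall]
    show dist (g n (min t (dist q (u n)))) q ≤ t
    rw [h, sub_zero, abs_of_nonneg hmm.1]
    exact min_le_left _ _
  have hptdist : ∀ t : ℝ, 0 ≤ t → ∀ n, t ≤ dist q (u n) → dist q (pt n t) = t := by
    intro t ht n hn
    have hmm : min t (dist q (u n)) ∈ Icc 0 (dist q (u n)) :=
      ⟨le_min ht dist_nonneg, min_le_right _ _⟩
    have h := h3 n _ hmm 0 ⟨le_rfl, dist_nonneg⟩
    rw [h1 n] at h
    rw [dist_comm q (pt n t)]
    show dist (g n (min t (dist q (u n)))) q = t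
    rw [h, sub_zero, abs_of_nonneg hmm.1, min_eq_left hn]
  set 𝒰 : Ultrafilter ℕ := Ultrafilter.of atTop with h𝒰def
  have h𝒰 : (𝒰 : Filter ℕ) ≤ atTop := Ultrafilter.of_le _
  have hlim : ∀ t : ℝ, 0 ≤ t → ∃ a, Tendsto (fun n => pt n t) 𝒰 (𝓝 a) := by
    intro t ht
    obtain ⟨a, _, ha⟩ := (isCompact_closedBall q t).ultrafilter_le_nhds
      (𝒰.map fun n => pt n t)
      (by
        rw [Ultrafilter.coe_map, le_principal_iff, mem_map]
        exact Filter.Eventually.of_forall (hptmem t ht))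
    exact ⟨a, by rwa [Ultrafilter.coe_map] at ha⟩
  classical
  set γ : ℝ → Z := fun t => if h : 0 ≤ t then (hlim t h).choose else q with hγdef
  have hγlim : ∀ t : ℝ, ∀ ht : 0 ≤ t, Tendsto (fun n => pt n t) 𝒰 (𝓝 (γ t)) := by
    intro t ht
    have : γ t = (hlim t ht).choose := by rw [hγdef]; simp [ht]
    rw [this]
    exact (hlim t ht).choose_spec
  have hray : IsRayFrom q γ := by
    constructor
    · have hc : Tendsto (fun _ : ℕ => q) (𝒰 : Filter ℕ) (𝓝 (γ 0)) := by
        refine (hγlim 0 le_rfl).congr fun n => ?_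
        show pt n 0 = q
        rw [hpt]
        simp only []
        rw [min_eq_left dist_nonneg, h1 n]
      exact tendsto_nhds_unique hc tendsto_const_nhds
    · intro s t hs ht
      have hd : Tendsto (fun n => dist (pt n s) (pt n t)) 𝒰 (𝓝 (dist (γ s) (γ t))) :=
        (hγlim s hs).dist (hγlim t ht)
      have he : ∀ᶠ n in (𝒰 : Filter ℕ), dist (pt n s) (pt n t) = |s - t| := by
        refine h𝒰 ?_
        filter_upwards [hD.eventually_ge_atTop (max s t)] with n hn
        have hsn : min s (dist q (u n)) = s := min_eq_left (le_trans (le_max_left s t) hn)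
        have htn : min t (dist q (u n)) = t := min_eq_left (le_trans (le_max_right s t) hn)
        show dist (g n (min s (dist q (u n)))) (g n (min t (dist q (u n)))) = |s - t|
        rw [hsn, htn]
        exact h3 n s ⟨hs, le_trans (le_max_left s t) hn⟩ t ⟨ht, le_trans (le_max_right s t) hn⟩
      exact tendsto_nhds_unique hd (tendsto_const_nhds.congr' (by filter_upwards [he] with n h using h.symm))
  -- lower bound on Gromov products along the limit ray
  have hgplow : ∀ M : ℝ, ∃ N : ℕ, ∀ i ≥ N, ∀ t : ℝ, M ≤ t → 0 ≤ t →
      M - δ ≤ gp q (γ t) (u i) := by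
    intro M
    obtain ⟨a, ha⟩ := eventually_atTop.1 ((hu q).eventually_ge_atTop M)
    refine ⟨max a.1 a.2, fun i hi t hMt ht => ?_⟩
    have hgl : Tendsto (fun n => gp q (pt n t) (u i)) 𝒰 (𝓝 (gp q (γ t) (u i))) := by
      unfold gp
      exact ((((hγlim t ht).dist tendsto_const_nhds).add tendsto_const_nhds).sub
        ((hγlim t ht).dist tendsto_const_nhds)).div_const 2
    have hev : ∀ᶠ n in (𝒰 : Filter ℕ), M - δ ≤ gp q (pt n t) (u i) := by
      refine h𝒰 ?_
      filter_upwards [hD.eventually_ge_atTop t, eventually_ge_atTop (max a.1 a.2)]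
        with n hn1 hn2
      have hmem : pt n t ∈ sg n := by
        rw [h4 n]
        exact ⟨min t (dist q (u n)), ⟨le_min ht dist_nonneg, min_le_right _ _⟩, rfl⟩
      have hdq : dist q (pt n t) = t := hptdist t ht n hn1
      have hσn : IsGeodSeg q (u n) (sg n) := ⟨g n, h1 n, h2 n, h3 n, h4 n⟩
      have hkey := gp_ge_min hg hZ q (u n) (u i) hσn hmem
      rw [hdq] at hkey
      have hun : M ≤ gp q (u n) (u i) := ha (n, i)
        (Prod.mk_le_mk.2 ⟨le_trans (le_max_left a.1 a.2) hn2,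
          le_trans (le_max_right a.1 a.2) hi⟩)
      have : M ≤ min t (gp q (u n) (u i)) := le_min hMt hun
      linarith
    exact ge_of_tendsto hgl hev
  refine ⟨γ, hray, ?_, ?_⟩
  · exact ray_admissible hray (fun n => Nat.cast_nonneg n) tendsto_natCast_atTop_atTop
  · have hrep' : mkB u hu = ζ := hrep
    show mkB (fun n : ℕ => γ n) _ = ζ
    rw [← hrep']
    refine Quot.sound ?_
    intro w
    refine tendsto_atTop.2 fun b => ?_
    obtain ⟨N, hN⟩ := hgplow (b + dist q w + δ)
    have hcast : ∀ᶠ i : ℕ in atTop, (b + dist q w + δ : ℝ) ≤ (i : ℝ) :=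
      tendsto_natCast_atTop_atTop.eventually_ge_atTop _
    filter_upwards [eventually_ge_atTop N, hcast] with i hiN hib
    have hq := hN i hiN (i : ℝ) hib (Nat.cast_nonneg i)
    have hb := gp_basepoint q w (γ (i : ℝ)) (u i)
    show b ≤ gp w (γ (i : ℝ)) (u i)
    linarith
end ExistsRay


/-- nesting of shadows under an `L`-quasi-isometry `f` between proper geodesic
`δ`-hyperbolic spaces, with `r_s := r/(1+L) − H − L > 0` and `r_b := (1+L)r + L + H`:
`sh_{f(p)}(B(f(x),r_s)) ⊆ f(sh_p(B(x,r))) ⊆ sh_{f(p)}(B(f(x),r_b))`. -/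
theorem shadow_nested {X Y : Type*} [MetricSpace X] [ProperSpace X]
    [MetricSpace Y] [ProperSpace Y]
    (hgX : GeodesicSpace X) (hgY : GeodesicSpace Y)
    (δ : ℝ) (hX : GromovHyperbolic X δ) (hY : GromovHyperbolic Y δ)
    (L : ℝ) (hL : 0 ≤ L) (f : X → Y) (hf : IsQuasiIsometry L f)
    (F : Bdry X → Bdry Y) (hF : ExtendsToBoundary f F) (hFbij : Function.Bijective F)
    (H : ℝ) (hH : 0 < H) (hstabX : StabilityConst X L H) (hstabY : StabilityConst Y L H)
    (r : ℝ) (hr : (H + L) * (1 + L) < r) :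
    0 < r / (1 + L) - H - L ∧
    ∀ p x : X,
      shadow (f p) (Metric.ball (f x) (r / (1 + L) - H - L)) ⊆
          F '' shadow p (Metric.ball x r) ∧
        F '' shadow p (Metric.ball x r) ⊆
          shadow (f p) (Metric.ball (f x) ((1 + L) * r + L + H)) := by
  have h1L : (0:ℝ) < 1 + L := by linarith
  have hrs : 0 < r / (1 + L) - H - L := by
    have h2 : H + L < r / (1 + L) := (lt_div_iff₀ h1L).2 (by linarith)
    linarith
  refine ⟨hrs, fun p x => ⟨?_, ?_⟩⟩
  · rintro η' ⟨γ', hray', hto', t₀, ht₀, hball⟩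
    obtain ⟨η, rfl⟩ := hFbij.2 η'
    obtain ⟨γ, hray, hto⟩ := exists_ray hgX hX p η
    have hsub := hstabY (Ici 0) (Ici 0) (fun t => f (γ t)) γ' ordConnected_Ici
      ordConnected_Ici (comp_isQG hf hray) (ray_isQG hL hray')
      (Sum.inl (f p)) (Sum.inr (F η))
      (comp_bwdEndpoint hray) (ray_bwdEndpoint hray')
      (comp_fwdEndpoint hF hray hto) (ray_fwdEndpoint hray' hto')
    have hmem := hsub ⟨t₀, ht₀, rfl⟩
    have hne : ((fun t => f (γ t)) '' Ici 0).Nonempty := ⟨f (γ 0), 0, Set.self_mem_Ici, rfl⟩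
    have hID : Metric.infDist (γ' t₀) ((fun t => f (γ t)) '' Ici 0) ≤ H :=
      ENNReal.toReal_le_of_le_ofReal hH.le (Metric.mem_cthickening_iff.1 hmem)
    have hballd : dist (γ' t₀) (f x) < r / (1 + L) - H - L := Metric.mem_ball.1 hball
    obtain ⟨v, hv, hdv⟩ := (Metric.infDist_lt_iff hne).1
      (show Metric.infDist (γ' t₀) ((fun t => f (γ t)) '' Ici 0) <
        H + ((r / (1 + L) - H - L) - dist (γ' t₀) (f x)) from by linarith)
    obtain ⟨s₀, hs₀, rfl⟩ := hv
    have hdv' : dist (γ' t₀) (f (γ s₀)) <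
        H + ((r / (1 + L) - H - L) - dist (γ' t₀) (f x)) := hdv
    have hQ := (hf.1 (γ s₀) x).2
    have hfd : dist (f (γ s₀)) (f x) < r / (1 + L) - L := by
      have htri := dist_triangle (f (γ s₀)) (γ' t₀) (f x)
      have hc : dist (f (γ s₀)) (γ' t₀) = dist (γ' t₀) (f (γ s₀)) := dist_comm _ _
      linarith [hdv']
    have hdx : dist (γ s₀) x < r := by
      have h5 : (1 + L)⁻¹ * dist (γ s₀) x < r / (1 + L) := by linarith
      rw [inv_mul_eq_div] at h5
      calc dist (γ s₀) x = dist (γ s₀) x / (1 + L) * (1 + L) :=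
            (div_mul_cancel₀ _ h1L.ne').symm
        _ < r / (1 + L) * (1 + L) := mul_lt_mul_of_pos_right h5 h1L
        _ = r := div_mul_cancel₀ _ h1L.ne'
    exact ⟨η, ⟨γ, hray, hto, s₀, hs₀, Metric.mem_ball.2 hdx⟩, rfl⟩
  · rintro _ ⟨η, ⟨γ, hray, hto, t₀, ht₀, hball⟩, rfl⟩
    obtain ⟨γ', hray', hto'⟩ := exists_ray hgY hY (f p) (F η)
    have hsub := hstabY (Ici 0) (Ici 0) γ' (fun t => f (γ t)) ordConnected_Ici
      ordConnected_Ici (ray_isQG hL hray') (comp_isQG hf hray)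
      (Sum.inl (f p)) (Sum.inr (F η))
      (ray_bwdEndpoint hray') (comp_bwdEndpoint hray)
      (ray_fwdEndpoint hray' hto') (comp_fwdEndpoint hF hray hto)
    have hmem := hsub ⟨t₀, ht₀, rfl⟩
    have hne : (γ' '' Ici 0).Nonempty := ⟨γ' 0, 0, Set.self_mem_Ici, rfl⟩
    have hID : Metric.infDist (f (γ t₀)) (γ' '' Ici 0) ≤ H :=
      ENNReal.toReal_le_of_le_ofReal hH.le (Metric.mem_cthickening_iff.1 hmem)
    have hballd : dist (γ t₀) x < r := Metric.mem_ball.1 hball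
    have hup : dist (f (γ t₀)) (f x) < (1 + L) * r + L := by
      have h6 := (hf.1 (γ t₀) x).1
      nlinarith [mul_pos h1L (sub_pos.2 hballd)]
    obtain ⟨v, hv, hdv⟩ := (Metric.infDist_lt_iff hne).1
      (show Metric.infDist (f (γ t₀)) (γ' '' Ici 0) <
        H + ((1 + L) * r + L - dist (f (γ t₀)) (f x)) from by linarith)
    obtain ⟨t₁, ht₁, rfl⟩ := hv
    refine ⟨γ', hray', hto', t₁, ht₁, Metric.mem_ball.2 ?_⟩
    have htri := dist_triangle (γ' t₁) (f (γ t₀)) (f x)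
    have hc : dist (γ' t₁) (f (γ t₀)) = dist (f (γ t₀)) (γ' t₁) := dist_comm _ _
    linarith [hdv]


end FlatRigidity
end
end

section
/- Let f: S̃ → T̃ be an L-quasi-isometry between proper geodesic δ-hyperbolic spaces, let H(δ,L) be the stability constant for L-quasi-geodesics, let p ∈ S̃, and let r: [0,∞) → S̃ be a geodesic ray emanating from p. If there is a constant C₅ > 0 with |d_{T̃}(f(p), f(r(t))) − d_{S̃}(p, r(t))| ≤ C₅ for all t ≥ 0, then |d_{S̃}(r(s), r(t)) − d_{T̃}(f(r(s)), f(r(t)))| ≤ 2(C₅ + H(δ,L)) for all s, t ≥ 0. -/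
open Metric Filter Set
open scoped ENNReal unitInterval

noncomputable section

namespace FlatRigidity


/-- if the distance to the base point along a geodesic ray is distorted by an
`L`-quasi-isometry `f` only up to the additive constant `C₅`, then all distances along
the ray are distorted by at most `2(C₅ + H(δ,L))`. -/
theorem bounded_basepoint_distortion {X Y : Type*} [MetricSpace X] [ProperSpace X]
    [MetricSpace Y] [ProperSpace Y]
    (hgX : GeodesicSpace X) (hgY : GeodesicSpace Y)
    (δ : ℝ) (hX : GromovHyperbolic X δ) (hY : GromovHyperbolic Y δ)
    (L : ℝ) (hL : 0 ≤ L) (f : X → Y) (hf : IsQuasiIsometry L f)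
    (H : ℝ) (hH : 0 < H) (hstabY : StabilityConst Y L H)
    (p : X) (γ : ℝ → X) (hγ : IsRayFrom p γ)
    (C₅ : ℝ) (hC₅ : 0 < C₅)
    (hbound : ∀ t : ℝ, 0 ≤ t → |dist (f p) (f (γ t)) - dist p (γ t)| ≤ C₅) :
    ∀ s t : ℝ, 0 ≤ s → 0 ≤ t →
      |dist (γ s) (γ t) - dist (f (γ s)) (f (γ t))| ≤ 2 * (C₅ + H) := by
  have key : ∀ s t : ℝ, 0 ≤ s → 0 ≤ t → s ≤ t →
      |dist (γ s) (γ t) - dist (f (γ s)) (f (γ t))| ≤ 2 * (C₅ + H) := by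
    intro s t hs ht hst
    obtain ⟨hγ0, hγd⟩ := hγ
    have dX : dist (γ s) (γ t) = t - s := by
      rw [hγd s t hs ht, abs_of_nonpos (by linarith)]; ring
    have dps : dist p (γ s) = s := by
      have := hγd 0 s le_rfl hs
      rw [hγ0] at this; rw [this, abs_of_nonpos (by linarith)]; ring
    have dpt : dist p (γ t) = t := by
      have := hγd 0 t le_rfl ht
      rw [hγ0] at this; rw [this, abs_of_nonpos (by linarith)]; ring
    have hbs := hbound s hs
    have hbt := hbound t ht
    rw [dps] at hbs; rw [dpt] at hbt
    obtain ⟨hbs1, hbs2⟩ := abs_le.mp hbs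
    obtain ⟨hbt1, hbt2⟩ := abs_le.mp hbt
    set D := dist (f p) (f (γ t)) with hDdef
    have hD0 : 0 ≤ D := dist_nonneg
    obtain ⟨seg, g', hg'0, hg'D, hg'dist, hsegdef⟩ := hgY (f p) (f (γ t))
    have hLpos : (0:ℝ) < 1 + L := by linarith
    have hinv : (1 + L)⁻¹ ≤ 1 := by
      rw [inv_le_one_iff₀]; right; linarith
    -- g' is an L-quasi-geodesic
    have hqg' : IsQuasiGeodesicOn L (Icc 0 D) g' := by
      intro u hu v hv
      rw [hg'dist u hu v hv]
      have habs : 0 ≤ |u - v| := abs_nonneg _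
      constructor
      · nlinarith
      · nlinarith [mul_le_mul_of_nonneg_right hinv habs]
    -- f ∘ γ is an L-quasi-geodesic
    have hqgf : IsQuasiGeodesicOn L (Icc 0 t) (fun u => f (γ u)) := by
      intro u hu v hv
      have := hf.1 (γ u) (γ v)
      rwa [hγd u v hu.1 hv.1] at this
    -- endpoints
    have hbwd1 : BwdEndpoint (Icc 0 D) g' (Sum.inl (f p)) :=
      ⟨0, ⟨⟨le_rfl, hD0⟩, fun x hx => hx.1⟩, hg'0⟩
    have hbwd2 : BwdEndpoint (Icc 0 t) (fun u => f (γ u)) (Sum.inl (f p)) :=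
      ⟨0, ⟨⟨le_rfl, ht⟩, fun x hx => hx.1⟩, by simp [hγ0]⟩
    have hfwd1 : FwdEndpoint (Icc 0 D) g' (Sum.inl (f (γ t))) :=
      ⟨D, ⟨⟨hD0, le_rfl⟩, fun x hx => hx.2⟩, hg'D⟩
    have hfwd2 : FwdEndpoint (Icc 0 t) (fun u => f (γ u)) (Sum.inl (f (γ t))) :=
      ⟨t, ⟨⟨ht, le_rfl⟩, fun x hx => hx.2⟩, rfl⟩
    have hsub := hstabY (Icc 0 D) (Icc 0 t) g' (fun u => f (γ u))
      Set.ordConnected_Icc Set.ordConnected_Icc hqg' hqgf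
      (Sum.inl (f p)) (Sum.inl (f (γ t))) hbwd1 hbwd2 hfwd1 hfwd2
    have hmem : f (γ s) ∈ Metric.cthickening H (g' '' Icc 0 D) :=
      hsub ⟨s, ⟨hs, hst⟩, rfl⟩
    -- the geodesic image is compact and nonempty
    have hlip : LipschitzOnWith 1 g' (Icc 0 D) := by
      intro u hu v hv
      have hd : dist (g' u) (g' v) = dist u v := by
        rw [hg'dist u hu v hv, Real.dist_eq]
      rw [edist_dist, edist_dist, hd]
      simp [edist_dist]
    have hcomp : IsCompact (g' '' Icc 0 D) :=
      isCompact_Icc.image_of_continuousOn hlip.continuousOn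
    have hne : (g' '' Icc 0 D).Nonempty := ⟨g' 0, 0, ⟨le_rfl, hD0⟩, rfl⟩
    have hinf : Metric.infDist (f (γ s)) (g' '' Icc 0 D) ≤ H := by
      rw [Metric.mem_cthickening_iff] at hmem
      exact ENNReal.toReal_le_of_le_ofReal hH.le hmem
    obtain ⟨q, hqmem, hq⟩ := hcomp.exists_infDist_eq_dist hne (f (γ s))
    have hdq : dist (f (γ s)) q ≤ H := hq ▸ hinf
    obtain ⟨u, hu, rfl⟩ := hqmem
    have h1 : dist (f p) (g' u) = u := by
      rw [← hg'0, hg'dist 0 ⟨le_rfl, hD0⟩ u hu, abs_of_nonpos (by linarith [hu.1])]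
      ring
    have h2 : dist (g' u) (f (γ t)) = D - u := by
      rw [← hg'D, hg'dist u hu D ⟨hD0, le_rfl⟩, abs_of_nonpos (by linarith [hu.2])]
      ring
    -- triangle inequalities
    have t1 : dist (f p) (f (γ t)) ≤ dist (f p) (f (γ s)) + dist (f (γ s)) (f (γ t)) :=
      dist_triangle _ _ _
    have t2 : dist (f (γ s)) (f (γ t)) ≤ dist (f (γ s)) (g' u) + dist (g' u) (f (γ t)) :=
      dist_triangle _ _ _
    have t3 : dist (f p) (f (γ s)) ≤ dist (f p) (g' u) + dist (g' u) (f (γ s)) :=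
      dist_triangle _ _ _
    have hsym : dist (g' u) (f (γ s)) = dist (f (γ s)) (g' u) := dist_comm _ _
    rw [dX, abs_le]
    constructor <;> [skip; skip] <;>
      [ (nlinarith [h1, h2, hdq, t2, t3, hsym, hbs1, hbs2, hbt1, hbt2]);
        (nlinarith [t1, hbs1, hbs2, hbt1, hbt2, hH.le]) ]
  intro s t hs ht
  rcases le_total s t with h | h
  · exact key s t hs ht h
  · have hk := key t s ht hs h
    rwa [dist_comm (γ t), dist_comm (f (γ t)), abs_sub_comm,
      abs_sub_comm (dist (f (γ s)) (f (γ t)))] at hk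


end FlatRigidity
end
end
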